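/- arXiv:2603.17636 — 3 statements merged into one kernel-verified Lean document; each statement's English description precedes it below -/
import Mathlib

section
/- Let q be a prime power, let m, k, s be positive integers with gcd(s,m)=1, and let S, T be F_q-subspaces of F_{q^m} with dim_{F_q}(S) = dim_{F_q}(T) > k. Then the Gabidulin systems G_{k,s,m}[S] and G_{k,s,m}[T] are equivalent as q-systems if and only if there exists a nonzero element α of F_{q^m} such that T = αS (that is, T = {α x : x ∈ S}). -/
/-!
Let `σ = Frob^s`; since `gcd(s, m) = 1` it generates `Gal(F_{q^m}/F_q)`, so its fixed field is
`F_q`. The key fact is that a `σ`-polynomial `∑_{i<n} c_i σ^i` vanishing on an `F_q`-subspace of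
dimension `≥ n` is zero: after rescaling the subspace to contain `1` the coefficients sum to zero,
and summation by parts writes the polynomial as one of `σ`-degree `n - 1` composed with `σ - 1`,
whose kernel is just `F_q`, so the dimension drops by at most one.

If `A` maps `G[S]` onto `G[T]`, then `A(x, σx, …)` is again of the form `(y, σy, …)`, so row
`j + 1` of `A` equals `σ` applied to row `j`, shifted by one place, as `σ`-polynomials of
`σ`-degree `≤ k` on `S`. Since `dim S > k` this holds coefficientwise, which forces the first row
of `A` to be `(α, 0, …, 0)`, and reading off first coordinates gives `T = αS`. Conversely
`diag(α, σα, σ²α, …)` maps `G[S]` onto `G[αS]`.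
-/

open Pointwise

/-- The Gabidulin system `G_{k,s,m}[S] = {(x, x^{q^s}, …, x^{q^{s(k-1)}}) : x ∈ S}`,
as a subset of `(F_{q^m})^k`. -/
def gabSys (q s k : ℕ) {L : Type*} [Field L] (S : Set L) : Set (Fin k → L) :=
  (fun x : L => fun i : Fin k => x ^ q ^ (s * (i : ℕ))) '' S

/-- Two subsets of `(F_{q^m})^k` are equivalent as q-systems if some `F_{q^m}`-linear
automorphism of `(F_{q^m})^k` maps one onto the other. -/
def qSysEquiv {L : Type*} [Field L] {k : ℕ} (U V : Set (Fin k → L)) : Prop :=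
  ∃ A : (Fin k → L) ≃ₗ[L] (Fin k → L), A '' U = V

open Finset Module

section

variable {K L : Type*} [Field K] [Field L] [Algebra K L] (σ : L →ₐ[K] L)

theorem finrank_le_finrank_map_sub_one_add_one
    (hσ : ∀ x, σ x = x → x ∈ Set.range (algebraMap K L))
    (S : Submodule K L) [FiniteDimensional K S] :
    finrank K S ≤ finrank K (S.map (σ.toLinearMap - 1)) + 1 := by
  set f := σ.toLinearMap - 1
  have hker : LinearMap.ker f ≤ K ∙ (1 : L) := fun x hx => by
    obtain ⟨c, rfl⟩ := hσ x (sub_eq_zero.mp hx)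
    exact Submodule.mem_span_singleton.mpr ⟨c, (Algebra.algebraMap_eq_smul_one c).symm⟩
  have hrank := (f ∘ₗ S.subtype).finrank_range_add_finrank_ker
  rw [LinearMap.range_comp, Submodule.range_subtype, LinearMap.ker_comp,
    ← Submodule.finrank_map_subtype_eq, Submodule.map_comap_subtype] at hrank
  have hker_rank : finrank K ↥(S ⊓ LinearMap.ker f) ≤ 1 :=
    (Submodule.finrank_mono (inf_le_right.trans hker)).trans (finrank_span_singleton one_ne_zero).le
  omega

theorem sum_range_succ_mul_pow_apply_of_sum_eq_zero {n : ℕ} {b : ℕ → L}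
    (hb : ∑ i ∈ range (n + 1), b i = 0) (y : L) :
    ∑ i ∈ range (n + 1), b i * (σ ^ i) y
      = -∑ i ∈ range n, (∑ j ∈ range (i + 1), b j) * (σ ^ i) (σ y - y) := by
  have := sum_range_by_parts (fun i => (σ ^ i) y) b (n + 1)
  simp only [smul_eq_mul, add_tsub_cancel_right, hb, mul_zero, zero_sub] at this
  rw [sum_congr rfl fun i _ => mul_comm (b i) _, this]
  refine congrArg Neg.neg (sum_congr rfl fun i _ => ?_)
  rw [mul_comm, map_sub, pow_succ, AlgHom.mul_apply]

theorem eq_zero_of_forall_mem_sum_mul_pow_apply_eq_zero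
    (hσ : ∀ x, σ x = x → x ∈ Set.range (algebraMap K L)) {n : ℕ} {S : Submodule K L}
    (hn : n ≤ finrank K S) {c : ℕ → L} (hc : ∀ x ∈ S, ∑ i ∈ range n, c i * (σ ^ i) x = 0) :
    ∀ i < n, c i = 0 := by
  induction n generalizing S c with
  | zero => intro i hi; omega
  | succ n ih =>
    obtain ⟨v, hvS, hv⟩ := Submodule.exists_mem_ne_zero_of_ne_bot (p := S) fun h => by
      rw [h, finrank_bot] at hn; omega
    have hσv : ∀ i, (σ ^ i) v ≠ 0 := fun i => (map_ne_zero (σ ^ i)).mpr hv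
    -- after rescaling by `v⁻¹` the subspace contains `1`, so the coefficients sum to zero
    set S' := S.map (LinearMap.mulLeft K v⁻¹)
    have hS' : finrank K S' = finrank K S :=
      (Submodule.equivMapOfInjective _ (mul_right_injective₀ (inv_ne_zero hv)) S).finrank_eq.symm
    have : FiniteDimensional K S' := Module.finite_of_finrank_pos (by omega)
    set b : ℕ → L := fun i => c i * (σ ^ i) v
    have hb : ∀ y ∈ S', ∑ i ∈ range (n + 1), b i * (σ ^ i) y = 0 := by
      rintro _ ⟨x, hx, rfl⟩
      refine (sum_congr rfl fun i _ => ?_).trans (hc x hx)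
      have := hσv i
      simp only [b, LinearMap.mulLeft_apply, map_mul, map_inv₀]
      field_simp
    have hb1 : ∑ i ∈ range (n + 1), b i = 0 := by
      simpa using hb 1 ⟨v, hvS, inv_mul_cancel₀ hv⟩
    set B : ℕ → L := fun i => ∑ j ∈ range (i + 1), b j
    have hB : ∀ i ≤ n, B i = 0 := by
      have := ih (S := S'.map (σ.toLinearMap - 1)) (c := B)
        (by have := finrank_le_finrank_map_sub_one_add_one σ hσ S'; omega)
        (by
          rintro _ ⟨y, hy, rfl⟩
          have h := sum_range_succ_mul_pow_apply_of_sum_eq_zero σ hb1 y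
          rwa [hb y hy, eq_comm, neg_eq_zero] at h)
      exact fun i hi => hi.lt_or_eq.elim (this i) fun h => h ▸ hb1
    have hbi : ∀ i ≤ n, b i = 0 := by
      rintro (_ | i) hi
      · simpa [B] using hB 0 hi
      · simpa [B, sum_range_succ, hB i (by omega)] using hB (i + 1) hi
    intro i hi
    exact (mul_eq_zero.mp (hbi i (by omega))).resolve_right (hσv i)

theorem apply_succ_eq_of_forall_mem_sum_eq_map_sum
    (hσ : ∀ x, σ x = x → x ∈ Set.range (algebraMap K L)) {k : ℕ} {S : Submodule K L}
    (hS : k < finrank K S) {a b : ℕ → L} (ha : a k = 0)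
    (h : ∀ x ∈ S, ∑ i ∈ range k, a i * (σ ^ i) x = σ (∑ i ∈ range k, b i * (σ ^ i) x)) :
    ∀ i < k, a (i + 1) = σ (b i) := by
  let shift : ℕ → L := fun | 0 => 0 | i + 1 => σ (b i)
  have hrel : ∀ x ∈ S, ∑ i ∈ range (k + 1), (a i - shift i) * (σ ^ i) x = 0 := by
    intro x hx
    rw [sum_congr rfl fun i _ => sub_mul _ _ _, sum_sub_distrib, sum_range_succ, ha, zero_mul,
      add_zero, h x hx, sum_range_succ', map_sum]
    simp [shift, pow_succ']
  intro i hi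
  exact sub_eq_zero.mp (eq_zero_of_forall_mem_sum_mul_pow_apply_eq_zero σ hσ hS hrel (i + 1)
    (by omega))

theorem eq_zero_of_apply_succ_succ_eq {k : ℕ} {r : ℕ → ℕ → L} (hr : ∀ j, r j k = 0)
    (hstep : ∀ j, j + 1 < k → ∀ i < k, r (j + 1) (i + 1) = σ (r j i))
    {i : ℕ} (hi₀ : 0 < i) (hik : i < k) : r 0 i = 0 := by
  have hdiag : ∀ t < k, ∀ i, i + t ≤ k → r t (i + t) = (σ ^ t) (r 0 i) := by
    intro t
    induction t with
    | zero => simp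
    | succ t ih =>
      intro ht i hi
      rw [← add_assoc, hstep t ht (i + t) (by omega), ih (by omega) i (by omega), pow_succ',
        AlgHom.mul_apply]
  have := hdiag (k - i) (by omega) i (by omega)
  rw [Nat.add_sub_cancel' hik.le, hr, eq_comm, map_eq_zero] at this
  exact this

def mooreVec (k : ℕ) (x : L) : Fin k → L := fun i => (σ ^ (i : ℕ)) x

theorem exists_forall_apply_zero_eq_mul
    (hσ : ∀ x, σ x = x → x ∈ Set.range (algebraMap K L)) {k : ℕ} [NeZero k]
    {S : Submodule K L} (hS : k < finrank K S) (A : (Fin k → L) →ₗ[L] (Fin k → L))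
    (hA : ∀ x ∈ S, A (mooreVec σ k x) ∈ Set.range (mooreVec σ k)) :
    ∃ α, ∀ y, A y 0 = α * y 0 := by
  set M := LinearMap.toMatrix' A
  have hA_apply : ∀ y j, A y j = ∑ i, M j i * y i := fun y j => by
    rw [← LinearMap.toMatrix'_mulVec]; rfl
  let r : ℕ → ℕ → L := fun j i => if h : j < k ∧ i < k then M ⟨j, h.1⟩ ⟨i, h.2⟩ else 0
  have hrow : ∀ x j (hj : j < k),
      A (mooreVec σ k x) ⟨j, hj⟩ = ∑ i ∈ range k, r j i * (σ ^ i) x := by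
    intro x j hj
    rw [hA_apply, ← Fin.sum_univ_eq_sum_range]
    simp [r, hj, mooreVec]
  have hstep : ∀ j, j + 1 < k → ∀ i < k, r (j + 1) (i + 1) = σ (r j i) := by
    intro j hj
    refine apply_succ_eq_of_forall_mem_sum_eq_map_sum σ hσ hS (a := r (j + 1)) (b := r j)
      (by simp [r]) fun x hx => ?_
    obtain ⟨y, hy⟩ := hA x hx
    rw [← hrow x _ hj, ← hrow x j (by omega), ← hy]
    simp only [mooreVec, pow_succ', AlgHom.mul_apply]
  refine ⟨r 0 0, fun y => ?_⟩
  rw [hA_apply, Fintype.sum_eq_single 0 fun i hi => ?_]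
  · simp [r, Nat.pos_of_neZero k]
  · have h0 := eq_zero_of_apply_succ_succ_eq σ (fun j => by simp [r]) hstep
      (Nat.pos_of_ne_zero (Fin.val_ne_zero_iff.mpr hi)) i.isLt
    simp only [r, Nat.pos_of_neZero k, i.isLt, and_self, dite_true] at h0
    rw [show M 0 i = 0 by simpa using h0, zero_mul]

theorem qSysEquiv_image_mooreVec_iff (hσ : ∀ x, σ x = x → x ∈ Set.range (algebraMap K L))
    {k : ℕ} [NeZero k] {S T : Submodule K L} (hS : k < finrank K S) :
    qSysEquiv (mooreVec σ k '' S) (mooreVec σ k '' T) ↔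
      ∃ α : L, α ≠ 0 ∧ (T : Set L) = α • (S : Set L) := by
  constructor
  · rintro ⟨A, hA⟩
    obtain ⟨α, hα⟩ := exists_forall_apply_zero_eq_mul σ hσ hS A.toLinearMap fun x hx =>
      Set.image_subset_range _ _ (hA ▸ Set.mem_image_of_mem A (Set.mem_image_of_mem _ hx))
    refine ⟨α, fun h => ?_, ?_⟩
    · obtain ⟨y, hy⟩ := A.surjective 1
      have := (hα y).symm.trans (congrFun hy 0)
      simp [h] at this
    · have hproj : (fun y : Fin k → L => y 0) '' (mooreVec σ k '' T) = T := by
        simp [Set.image_image, mooreVec]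
      rw [← hproj, ← hA, Set.image_image, Set.image_image, ← Set.image_smul]
      exact Set.image_congr fun x _ => (hα _).trans (by simp [mooreVec])
  · rintro ⟨α, hα, hT⟩
    refine ⟨LinearEquiv.piCongrRight fun i : Fin k =>
      LinearEquiv.smulOfNeZero L L ((σ ^ (i : ℕ)) α) ((map_ne_zero _).mpr hα), ?_⟩
    rw [hT, ← Set.image_smul, Set.image_image, Set.image_image]
    refine Set.image_congr fun x _ => funext fun i => ?_
    simp [mooreVec]

end

open FiniteField Function in
theorem mem_range_algebraMap_of_pow_card_pow_eq_self {K L : Type*} [Field K] [Fintype K]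
    [Field L] [Finite L] [Algebra K L] {s : ℕ} (hs : s.Coprime (finrank K L)) {x : L}
    (hx : x ^ Fintype.card K ^ s = x) : x ∈ Set.range (algebraMap K L) := by
  have hperiod_s : IsPeriodicPt (frobeniusAlgHom K L) s x := by
    simpa [IsPeriodicPt, IsFixedPt, coe_frobeniusAlgHom, pow_iterate] using hx
  have hperiod_m : IsPeriodicPt (frobeniusAlgHom K L) (finrank K L) x := by
    rw [IsPeriodicPt, ← AlgHom.coe_pow, ← orderOf_frobeniusAlgHom, pow_orderOf_eq_one]
    rfl
  have hfix : IsFixedPt (frobeniusAlgEquivOfAlgebraic K L) x := by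
    have := hperiod_s.gcd hperiod_m
    rwa [hs.gcd_eq_one] at this
  refine (IsGalois.mem_range_algebraMap_iff_fixed x).mpr fun f => ?_
  obtain ⟨n, rfl⟩ := (bijective_frobeniusAlgEquivOfAlgebraic_pow K L).2 f
  simpa using (hfix.iterate n).eq

theorem gabSys_card_eq_image_mooreVec {K L : Type*} [Field K] [Fintype K] [Field L]
    [Algebra K L] (s k : ℕ) (U : Set L) :
    gabSys (Fintype.card K) s k U = mooreVec (FiniteField.frobeniusAlgHom K L ^ s) k '' U := by
  refine Set.image_congr fun x _ => funext fun i => ?_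
  rw [mooreVec, ← pow_mul, AlgHom.coe_pow, FiniteField.coe_frobeniusAlgHom, pow_iterate]

theorem stmt0_general (q m k s : ℕ) (hk : 0 < k)
    (hsm : Nat.gcd s m = 1)
    (K L : Type*) [Field K] [Fintype K] [Field L] [Fintype L] [Algebra K L]
    (hcardK : Fintype.card K = q) (hrank : Module.finrank K L = m)
    (S T : Submodule K L)
    (hgt : k < Module.finrank K S) :
    qSysEquiv (gabSys q s k (S : Set L)) (gabSys q s k (T : Set L)) ↔
      ∃ α : L, α ≠ 0 ∧ (T : Set L) = α • (S : Set L) := by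
  subst hcardK hrank
  have : NeZero k := ⟨hk.ne'⟩
  rw [gabSys_card_eq_image_mooreVec, gabSys_card_eq_image_mooreVec]
  refine qSysEquiv_image_mooreVec_iff _ (fun x hx => ?_) hgt
  refine mem_range_algebraMap_of_pow_card_pow_eq_self hsm ?_
  simpa [FiniteField.coe_frobeniusAlgHom, pow_iterate] using hx

/-- for `F_q`-subspaces `S, T ⊆ F_{q^m}` of the same dimension `> k`,
the Gabidulin systems `G_{k,s,m}[S]` and `G_{k,s,m}[T]` are equivalent as q-systems
iff `T = αS` for some nonzero `α ∈ F_{q^m}`. -/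
theorem stmt0 (q m k s : ℕ) (hq : IsPrimePow q) (hm : 0 < m) (hk : 0 < k) (hs : 0 < s)
    (hsm : Nat.gcd s m = 1)
    (K L : Type*) [Field K] [Fintype K] [Field L] [Fintype L] [Algebra K L]
    (hcardK : Fintype.card K = q) (hrank : Module.finrank K L = m)
    (S T : Submodule K L)
    (hdim : Module.finrank K S = Module.finrank K T)
    (hgt : k < Module.finrank K S) :
    qSysEquiv (gabSys q s k (S : Set L)) (gabSys q s k (T : Set L)) ↔
      ∃ α : L, α ≠ 0 ∧ (T : Set L) = α • (S : Set L) :=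
  stmt0_general q m k s hk hsm K L hcardK hrank S T hgt
end

section
/- Let q be a prime power, let m, k, s be positive integers with gcd(s,m)=1 and 1 ≤ k < m, and let G_{k,s,m} = {(x, x^{q^s}, ..., x^{q^{s(k-1)}}) : x ∈ F_{q^m}} ⊆ (F_{q^m})^k. Then an invertible k×k matrix A over F_{q^m} satisfies A·G_{k,s,m} = G_{k,s,m} (multiplying column vectors) if and only if A is the diagonal matrix diag(d, d^{q^s}, d^{q^{2s}}, ..., d^{q^{s(k-1)}}) for some nonzero d ∈ F_{q^m}. In other words, the stabilizer of the Gabidulin system G_{k,s,m} in GL(k, F_{q^m}) is exactly {diag(d, d^{q^s}, ..., d^{q^{s(k-1)}}) : d ∈ F_{q^m}, d ≠ 0}. -/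
open Finset Matrix

-- Dedekind's independence of characters, for families in which characters may repeat.
theorem sum_filter_eq_of_forall_sum_mul_eq {M L F ι κ : Type*} [Monoid M] [CommRing L]
    [IsDomain L] [FunLike F M L] [DecidableEq F] [MonoidHomClass F M L] {s : Finset ι} {t : Finset κ}
    {τ : ι → F} {τ' : κ → F} {b : ι → L} {c : κ → L}
    (h : ∀ x, ∑ i ∈ s, b i * τ i x = ∑ j ∈ t, c j * τ' j x) (f : F) :
    ∑ i ∈ s with τ i = f, b i = ∑ j ∈ t with τ' j = f, c j := by
  classical
  have hcoe : Function.Injective ((↑) : F → M →* L) := fun g g' hg =>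
    DFunLike.ext _ _ fun x => DFunLike.congr_fun hg x
  have hPQ : ∑ i ∈ s, Finsupp.single (τ i : M →* L) (b i)
      = ∑ j ∈ t, Finsupp.single (τ' j : M →* L) (c j) :=
    linearIndependent_monoidHom M L <| by
      ext x
      simpa [Finsupp.linearCombination_apply, Finsupp.sum_finsetSum_index, mul_comm] using h x
  simpa [Finsupp.finsetSum_apply, Finsupp.single_apply, Finset.sum_filter, hcoe.eq_iff]
    using DFunLike.congr_fun hPQ (f : M →* L)

theorem pow_eq_pow_iff_of_le_add {G : Type*} [Group G] {g : G} {k a b : ℕ}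
    (hg : ∀ i, 0 < i → i ≤ k → g ^ i ≠ 1) (hab : a ≤ b + k) (hba : b ≤ a + k) :
    g ^ a = g ^ b ↔ a = b := by
  refine ⟨fun h => ?_, congrArg _⟩
  by_contra hne
  rcases Nat.lt_or_gt_of_ne hne with hlt | hlt
  · exact hg (b - a) (by omega) (by omega) (by rw [pow_sub g hlt.le, h, mul_inv_cancel])
  · exact hg (a - b) (by omega) (by omega) (by rw [pow_sub g hlt.le, h, mul_inv_cancel])

namespace AlgEquiv

variable {R L : Type*} [CommSemiring R] [Field L] [Algebra R L] (σ : L ≃ₐ[R] L)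

def orbitVec (k : ℕ) (x : L) : Fin k → L := fun i => (σ ^ (i : ℕ)) x

variable {σ} {k : ℕ} {A : Matrix (Fin k) (Fin k) L}

theorem sum_mul_pow_apply_eq [NeZero k] (hA : ∀ x, A *ᵥ σ.orbitVec k x ∈ Set.range (σ.orbitVec k))
    (r : Fin k) (x : L) :
    ∑ j, A r j * (σ ^ (j : ℕ)) x = ∑ j, (σ ^ (r : ℕ)) (A 0 j) * (σ ^ ((r : ℕ) + j)) x := by
  obtain ⟨y, hy⟩ := hA x
  have hrow : ∀ i, ∑ j, A i j * (σ ^ (j : ℕ)) x = (σ ^ (i : ℕ)) y := fun i =>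
    (congrFun hy i).symm
  rw [hrow r, ← (by simpa using hrow 0 : ∑ j, A 0 j * (σ ^ (j : ℕ)) x = y), map_sum]
  simp only [map_mul, pow_add, mul_apply]

theorem diagonal_mulVec_orbitVec (d x : L) :
    (diagonal fun i : Fin k => (σ ^ (i : ℕ)) d) *ᵥ σ.orbitVec k x = σ.orbitVec k (d * x) := by
  ext i
  simp [orbitVec, mulVec_diagonal]

theorem image_range_orbitVec_diagonal {d : L} (hd : d ≠ 0) :
    (fun v => (diagonal fun i : Fin k => (σ ^ (i : ℕ)) d) *ᵥ v) '' Set.range (σ.orbitVec k)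
      = Set.range (σ.orbitVec k) := by
  rw [← Set.range_comp, Function.comp_def]
  simp_rw [diagonal_mulVec_orbitVec]
  exact (mulLeft_bijective₀ d hd).surjective.range_comp (σ.orbitVec k)

variable (hσ : ∀ i, 0 < i → i ≤ k → σ ^ i ≠ 1)
include hσ

theorem pow_fin_eq_pow_fin_iff {i j : Fin k} : σ ^ (i : ℕ) = σ ^ (j : ℕ) ↔ i = j := by
  rw [pow_eq_pow_iff_of_le_add hσ (by omega) (by omega), Fin.val_inj]

theorem apply_zero_eq_zero_of_ne_zero [NeZero k]
    (hA : ∀ x, A *ᵥ σ.orbitVec k x ∈ Set.range (σ.orbitVec k)) {j : Fin k} (hj : j ≠ 0) :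
    A 0 j = 0 := by
  classical
  have hj' : 0 < (j : ℕ) := Fin.pos_iff_ne_zero.mpr hj
  let r : Fin k := ⟨k - j, by omega⟩
  have hr : (r : ℕ) = k - j := rfl
  have key := sum_filter_eq_of_forall_sum_mul_eq (sum_mul_pow_apply_eq hA r) (σ ^ k)
  have hlhs : ∑ i ∈ univ with σ ^ ((i : Fin k) : ℕ) = σ ^ k, A r i = 0 :=
    sum_eq_zero fun i hi => by
      have := i.isLt
      have := (pow_eq_pow_iff_of_le_add hσ (by omega) (by omega)).mp (mem_filter.mp hi).2
      omega
  have hrhs : ∀ i : Fin k, σ ^ ((r : ℕ) + i) = σ ^ k ↔ i = j := fun i => by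
    have := i.isLt
    rw [pow_eq_pow_iff_of_le_add hσ (by omega) (by omega), ← Fin.val_inj]
    omega
  simp_rw [hlhs, hrhs, filter_eq', if_pos (mem_univ j), sum_singleton] at key
  exact (map_eq_zero_iff _ (σ ^ (r : ℕ)).injective).mp key.symm

theorem eq_diagonal_of_mulVec_orbitVec_mem_range [NeZero k]
    (hA : ∀ x, A *ᵥ σ.orbitVec k x ∈ Set.range (σ.orbitVec k)) :
    A = diagonal fun i : Fin k => (σ ^ (i : ℕ)) (A 0 0) := by
  classical
  ext r j
  have hrow : ∀ x, ∑ j, A r j * (σ ^ (j : ℕ)) x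
      = ∑ i ∈ {r}, (σ ^ (r : ℕ)) (A 0 0) * (σ ^ (i : ℕ)) x := fun x => by
    rw [sum_mul_pow_apply_eq hA, sum_eq_single 0, sum_singleton, Fin.val_zero, add_zero]
    · intro i _ hi
      rw [apply_zero_eq_zero_of_ne_zero hσ hA hi, map_zero, zero_mul]
    · exact fun h => absurd (mem_univ 0) h
  have key := sum_filter_eq_of_forall_sum_mul_eq hrow (σ ^ (j : ℕ))
  simp only [pow_fin_eq_pow_fin_iff hσ, filter_eq', mem_univ, if_true, sum_singleton,
    filter_singleton] at key
  rw [key, diagonal_apply]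
  split_ifs <;> simp only [sum_singleton, sum_empty]

theorem isUnit_and_image_range_orbitVec_iff [NeZero k] :
    (IsUnit A ∧ (fun v => A *ᵥ v) '' Set.range (σ.orbitVec k) = Set.range (σ.orbitVec k)) ↔
      ∃ d : L, d ≠ 0 ∧ A = diagonal fun i : Fin k => (σ ^ (i : ℕ)) d := by
  constructor
  · rintro ⟨hunit, himg⟩
    have hdiag := eq_diagonal_of_mulVec_orbitVec_mem_range hσ fun x =>
      himg ▸ Set.mem_image_of_mem _ (Set.mem_range_self x)
    refine ⟨A 0 0, fun h0 => ?_, hdiag⟩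
    rw [hdiag, isUnit_diagonal] at hunit
    simpa [h0] using Pi.isUnit_iff.mp hunit 0
  · rintro ⟨d, hd, rfl⟩
    refine ⟨isUnit_diagonal.mpr (Pi.isUnit_iff.mpr fun i => ?_), image_range_orbitVec_diagonal hd⟩
    exact isUnit_iff_ne_zero.mpr ((map_ne_zero_iff _ (σ ^ (i : ℕ)).injective).mpr hd)

end AlgEquiv

theorem stmt1_general (q m k s : ℕ) (hk : 1 ≤ k) (hkm : k < m)
    (hsm : Nat.gcd s m = 1)
    (K L : Type*) [Field K] [Fintype K] [Field L] [Fintype L] [Algebra K L]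
    (hcardK : Fintype.card K = q) (hrank : Module.finrank K L = m)
    (A : Matrix (Fin k) (Fin k) L) :
    (IsUnit A ∧
        (fun v => A.mulVec v) '' gabSys q s k (Set.univ : Set L)
          = gabSys q s k (Set.univ : Set L)) ↔
      ∃ d : L, d ≠ 0 ∧ A = Matrix.diagonal (fun i : Fin k => d ^ q ^ (s * (i : ℕ))) := by
  have : NeZero k := ⟨by omega⟩
  set σ := FiniteField.frobeniusAlgEquivOfAlgebraic K L ^ s
  have hσ_pow_apply : ∀ (n : ℕ) (x : L), (σ ^ n) x = x ^ q ^ (s * n) := fun n x => by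
    rw [← pow_mul, AlgEquiv.coe_pow, FiniteField.coe_frobeniusAlgEquivOfAlgebraic_iterate, hcardK]
  have hfrob : orderOf (FiniteField.frobeniusAlgEquivOfAlgebraic K L) = m := by
    rw [FiniteField.orderOf_frobeniusAlgEquivOfAlgebraic, hrank]
  have horder : orderOf σ = m := by
    rw [Nat.Coprime.orderOf_pow (hfrob ▸ Nat.coprime_comm.mp hsm), hfrob]
  have hgab : gabSys q s k (Set.univ : Set L) = Set.range (σ.orbitVec k) := by
    rw [gabSys, Set.image_univ]
    exact congrArg Set.range (funext fun x => funext fun i => (hσ_pow_apply i x).symm)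
  simp_rw [hgab, ← hσ_pow_apply]
  exact AlgEquiv.isUnit_and_image_range_orbitVec_iff
    fun i hi hik => pow_ne_one_of_lt_orderOf hi.ne' (by omega)

/-- the stabilizer of the Gabidulin system `G_{k,s,m}` in `GL(k, F_{q^m})`
consists precisely of the matrices `diag(d, d^{q^s}, …, d^{q^{s(k-1)}})` with `d ≠ 0`. -/
theorem stmt1 (q m k s : ℕ) (hq : IsPrimePow q) (hk : 1 ≤ k) (hkm : k < m) (hs : 0 < s)
    (hsm : Nat.gcd s m = 1)
    (K L : Type*) [Field K] [Fintype K] [Field L] [Fintype L] [Algebra K L]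
    (hcardK : Fintype.card K = q) (hrank : Module.finrank K L = m)
    (A : Matrix (Fin k) (Fin k) L) :
    (IsUnit A ∧
        (fun v => A.mulVec v) '' gabSys q s k (Set.univ : Set L)
          = gabSys q s k (Set.univ : Set L)) ↔
      ∃ d : L, d ≠ 0 ∧ A = Matrix.diagonal (fun i : Fin k => d ^ q ^ (s * (i : ℕ))) :=
  stmt1_general q m k s hk hkm hsm K L hcardK hrank A
end

section
/- Let q be a prime power and let m, s be positive integers with gcd(s,m)=1. An invertible m×m matrix A over F_{q^m} satisfies A·G_{m,s,m} = G_{m,s,m} if and only if A equals the Dickson matrix D_f of some q^s-polynomial f(x) = a_0 x + a_1 x^{q^s} + ... + a_{m-1} x^{q^{s(m-1)}} with coefficients a_i ∈ F_{q^m} such that the induced map x ↦ f(x) is a bijection of F_{q^m}. That is, the stabilizer of G_{m,s,m} in GL(m, F_{q^m}) is exactly the set of Dickson matrices of invertible q^s-linearized polynomials. -/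
/-- The Dickson matrix of the `q^s`-polynomial with coefficient vector `a`:
its `(i,j)` entry is `a_{(j-i) mod m}^{q^{si}}`. -/
def dicksonMatrix (q s m : ℕ) {L : Type*} [Field L] (a : Fin m → L) :
    Matrix (Fin m) (Fin m) L :=
  Matrix.of fun i j : Fin m => (a (j - i)) ^ q ^ (s * (i : ℕ))

/-- The `F_q`-linear map of `F_{q^m}` induced by the `q^s`-polynomial with
coefficient vector `a`, namely `x ↦ ∑ a_i x^{q^{si}}`. -/
def qPolyMap (q s m : ℕ) {L : Type*} [Field L] (a : Fin m → L) : L → L :=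
  fun x => ∑ i : Fin m, a i * x ^ q ^ (s * (i : ℕ))


/-!
Write `σ` for the Frobenius `x ↦ x^q` of `L/K`, an automorphism of order `m`, and
`v(x) = (σ^{si} x)_i`. Reindexing the sum gives `D_f v(x) = v(f x)`. Since `gcd(s, m) = 1`, the
`σ^{si}` are `m` distinct automorphisms, hence linearly independent by Dedekind's lemma, and
therefore the vectors `v(x)` span `L^m`: a matrix is determined by its values on the Gabidulin
system. If `A` stabilizes the system, then `A v(x) = v(f x)` where `f` has the first row of `A` as
coefficients, so `A = D_f`, and `f` is onto because the image is the whole system. Conversely,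
for `f` bijective `D_f` maps the system onto itself, so its range contains a spanning set.
-/

open Module Matrix

def gabidulinVec (q s m : ℕ) {L : Type*} [Field L] (x : L) : Fin m → L :=
  fun i => x ^ q ^ (s * (i : ℕ))

section GabidulinVec

variable {q s m : ℕ} {L : Type*} [Field L]

theorem gabSys_univ : gabSys q s m (Set.univ : Set L) = Set.range (gabidulinVec q s m) :=
  Set.image_univ

theorem gabidulinVec_apply_zero [NeZero m] (x : L) : gabidulinVec q s m x 0 = x := by
  simp [gabidulinVec]

theorem gabidulinVec_injective [NeZero m] : Function.Injective (gabidulinVec (L := L) q s m) :=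
  fun x y h => by simpa only [gabidulinVec_apply_zero] using congrFun h 0

theorem mulVec_gabidulinVec_apply_zero [NeZero m] (A : Matrix (Fin m) (Fin m) L) (x : L) :
    (A *ᵥ gabidulinVec q s m x) 0 = qPolyMap q s m (A 0) x :=
  rfl

theorem mulVec_gabidulinVec_eq_of_mem [NeZero m] (A : Matrix (Fin m) (Fin m) L) (x : L)
    (h : A *ᵥ gabidulinVec q s m x ∈ Set.range (gabidulinVec q s m)) :
    A *ᵥ gabidulinVec q s m x = gabidulinVec q s m (qPolyMap q s m (A 0) x) := by
  obtain ⟨y, hy⟩ := h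
  rw [← hy, ← mulVec_gabidulinVec_apply_zero, ← hy, gabidulinVec_apply_zero]

end GabidulinVec

theorem Matrix.isUnit_of_subset_range_mulVec {n R : Type*} [Fintype n] [DecidableEq n]
    [CommRing R] {A : Matrix n n R} {S : Set (n → R)} (hS : Submodule.span R S = ⊤)
    (h : S ⊆ Set.range A.mulVec) : IsUnit A := by
  have hrange : LinearMap.range A.mulVecLin = ⊤ :=
    eq_top_iff.2 (hS ▸ Submodule.span_le.2 h)
  exact Matrix.mulVec_surjective_iff_isUnit.1 (LinearMap.range_eq_top.1 hrange)

theorem span_range_eq_top_of_linearIndependent_eval {ι X R : Type*} [Fintype ι] [Field R]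
    (v : X → ι → R) (hv : LinearIndependent R fun (i : ι) (x : X) => v x i) :
    Submodule.span R (Set.range v) = ⊤ := by
  classical
  by_contra hne
  obtain ⟨f, hf0, hker⟩ := Submodule.exists_le_ker_of_lt_top _ (lt_top_iff_ne_top.2 hne)
  have hsingle (i : ι) : (fun j => if i = j then (1 : R) else 0) = Pi.single i 1 :=
    funext fun j => by simp only [Pi.single_apply, eq_comm]
  have hsum : ∑ i, f (Pi.single i 1) • (fun x => v x i) = 0 := by
    funext x
    have hx : f (v x) = 0 := hker (Submodule.subset_span ⟨x, rfl⟩)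
    rw [LinearMap.pi_apply_eq_sum_univ f] at hx
    simpa only [hsingle, Finset.sum_apply, Pi.smul_apply, Pi.zero_apply, smul_eq_mul, mul_comm]
      using hx
  have hcoeff := Fintype.linearIndependent_iff.1 hv _ hsum
  exact hf0 (LinearMap.pi_ext' fun i => LinearMap.ext_ring (hcoeff i))

section Frobenius

variable {K L : Type*} [Field K] [Fintype K] [Field L] [Fintype L] [Algebra K L]

local notation "σ" => FiniteField.frobeniusAlgEquivOfAlgebraic K L

theorem frobeniusAlgEquivOfAlgebraic_pow_apply (t : ℕ) (x : L) :
    (σ ^ t) x = x ^ Fintype.card K ^ t := by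
  rw [AlgEquiv.coe_pow, FiniteField.coe_frobeniusAlgEquivOfAlgebraic_iterate]

theorem pow_card_pow_eq_of_modEq {a b : ℕ} (h : a ≡ b [MOD finrank K L]) (x : L) :
    x ^ Fintype.card K ^ a = x ^ Fintype.card K ^ b := by
  rw [← FiniteField.orderOf_frobeniusAlgEquivOfAlgebraic, ← pow_eq_pow_iff_modEq] at h
  rw [← frobeniusAlgEquivOfAlgebraic_pow_apply, ← frobeniusAlgEquivOfAlgebraic_pow_apply, h]

/-- Dedekind's lemma applied to the automorphisms `σ^{s i}`, which are distinct because `σ` has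
order `m` and `s` is invertible modulo `m`. -/
theorem linearIndependent_pow_card_pow_mul {s : ℕ} (hs : s.Coprime (finrank K L)) :
    LinearIndependent L fun (i : Fin (finrank K L)) (x : L) => x ^ Fintype.card K ^ (s * i) := by
  have hinj : Function.Injective fun i : Fin (finrank K L) =>
      (powMonoidHom (Fintype.card K ^ (s * i)) : L →* L) := by
    intro i j hij
    have hpow : σ ^ (s * i) = σ ^ (s * j) := AlgEquiv.ext fun x => by
      simpa only [frobeniusAlgEquivOfAlgebraic_pow_apply, powMonoidHom_apply]
        using DFunLike.congr_fun hij x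
    have hmod := pow_eq_pow_iff_modEq.1 hpow
    rw [FiniteField.orderOf_frobeniusAlgEquivOfAlgebraic] at hmod
    exact Fin.ext (Nat.ModEq.eq_of_lt_of_lt (hmod.cancel_left_of_coprime hs.symm) i.2 j.2)
  exact (linearIndependent_monoidHom L L).comp _ hinj

theorem dicksonMatrix_mulVec_gabidulinVec {s : ℕ} (a : Fin (finrank K L) → L) (x : L) :
    dicksonMatrix (Fintype.card K) s (finrank K L) a *ᵥ gabidulinVec (Fintype.card K) s _ x
      = gabidulinVec (Fintype.card K) s _ (qPolyMap (Fintype.card K) s _ a x) := by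
  have : NeZero (finrank K L) := NeZero.of_pos finrank_pos
  funext i
  simp only [mulVec, dotProduct, dicksonMatrix, gabidulinVec, qPolyMap, of_apply]
  rw [← frobeniusAlgEquivOfAlgebraic_pow_apply, map_sum]
  refine Fintype.sum_equiv (Equiv.subRight i) _ _ fun j => ?_
  rw [map_mul, frobeniusAlgEquivOfAlgebraic_pow_apply, frobeniusAlgEquivOfAlgebraic_pow_apply,
    ← pow_mul, ← pow_add]
  have hmod :
      s * (j : ℕ) ≡ s * ((j - i : Fin (finrank K L)) : ℕ) + s * i [MOD finrank K L] := by
    rw [← mul_add]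
    refine Nat.ModEq.mul_left s ?_
    have h := Nat.mod_modEq ((j - i : Fin (finrank K L)) + (i : ℕ)) (finrank K L)
    rwa [← Fin.val_add, sub_add_cancel] at h
  rw [Equiv.subRight_apply, pow_card_pow_eq_of_modEq hmod]

theorem image_dicksonMatrix_mulVec_range_gabidulinVec {s : ℕ} {a : Fin (finrank K L) → L}
    (ha : Function.Surjective (qPolyMap (Fintype.card K) s _ a)) :
    (dicksonMatrix (Fintype.card K) s _ a *ᵥ ·) '' Set.range (gabidulinVec (Fintype.card K) s _)
      = Set.range (gabidulinVec (Fintype.card K) s (finrank K L)) := by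
  rw [← Set.range_comp, Function.comp_def]
  simp only [dicksonMatrix_mulVec_gabidulinVec]
  rw [← Function.comp_def, Set.range_comp, ha.range_eq, Set.image_univ]

theorem span_range_gabidulinVec {s : ℕ} (hs : s.Coprime (finrank K L)) :
    Submodule.span L (Set.range (gabidulinVec (L := L) (Fintype.card K) s (finrank K L))) = ⊤ :=
  span_range_eq_top_of_linearIndependent_eval _ (linearIndependent_pow_card_pow_mul hs)

end Frobenius

theorem stmt2_general (q m s : ℕ)
    (hsm : Nat.gcd s m = 1)
    (K L : Type*) [Field K] [Fintype K] [Field L] [Fintype L] [Algebra K L]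
    (hcardK : Fintype.card K = q) (hrank : Module.finrank K L = m)
    (A : Matrix (Fin m) (Fin m) L) :
    (IsUnit A ∧
        (fun v => A.mulVec v) '' gabSys q s m (Set.univ : Set L)
          = gabSys q s m (Set.univ : Set L)) ↔
      ∃ a : Fin m → L, Function.Bijective (qPolyMap q s m a) ∧ A = dicksonMatrix q s m a := by
  subst hcardK hrank
  have : NeZero (finrank K L) := NeZero.of_pos finrank_pos
  have hspan := span_range_gabidulinVec (K := K) (L := L) hsm
  rw [gabSys_univ]
  constructor
  · rintro ⟨-, hA⟩
    have hAv (x : L) :=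
      mulVec_gabidulinVec_eq_of_mem A x (hA ▸ Set.mem_image_of_mem _ (Set.mem_range_self x))
    have hsurj : Function.Surjective (qPolyMap (Fintype.card K) s _ (A 0)) := fun y => by
      obtain ⟨_, ⟨x, rfl⟩, hx⟩ := hA.symm ▸ Set.mem_range_self (f := gabidulinVec _ s _) y
      exact ⟨x, gabidulinVec_injective ((hAv x).symm.trans hx)⟩
    refine ⟨A 0, ⟨Finite.injective_iff_surjective.2 hsurj, hsurj⟩, ?_⟩
    refine Matrix.toLin'.injective (LinearMap.ext_on hspan ?_)
    rintro _ ⟨x, rfl⟩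
    simp only [Matrix.toLin'_apply, hAv, dicksonMatrix_mulVec_gabidulinVec]
  · rintro ⟨a, hbij, rfl⟩
    have himage := image_dicksonMatrix_mulVec_range_gabidulinVec hbij.2
    refine ⟨isUnit_of_subset_range_mulVec hspan ?_, himage⟩
    exact himage.symm ▸ Set.image_subset_range _ _

/-- the stabilizer of `G_{m,s,m}` in `GL(m, F_{q^m})` consists exactly of
the Dickson matrices of invertible `q^s`-linearized polynomials. -/
theorem stmt2 (q m s : ℕ) (hq : IsPrimePow q) (hm : 0 < m) (hs : 0 < s)
    (hsm : Nat.gcd s m = 1)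
    (K L : Type*) [Field K] [Fintype K] [Field L] [Fintype L] [Algebra K L]
    (hcardK : Fintype.card K = q) (hrank : Module.finrank K L = m)
    (A : Matrix (Fin m) (Fin m) L) :
    (IsUnit A ∧
        (fun v => A.mulVec v) '' gabSys q s m (Set.univ : Set L)
          = gabSys q s m (Set.univ : Set L)) ↔
      ∃ a : Fin m → L, Function.Bijective (qPolyMap q s m a) ∧ A = dicksonMatrix q s m a :=
  stmt2_general q m s hsm K L hcardK hrank A
end
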